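/- Let R be a commutative ring, I an ideal of R, D = D(R, I) = {(a, b) ∈ R × R : a − b ∈ I} the double of R along I, and K = {(0, x) : x ∈ I} the kernel of the first projection D → R. Let n ≥ 3 and let v ∈ Um_n(D, K) be such that v·ε = e_1 for some ε ∈ E_n(D). Then there exists ε' ∈ E_n(D, K) with v·ε' = e_1. -/

import Mathlib

/-!
The first projection `π : D → R` has the diagonal `a ↦ (a, a)` as a section `σ`, so `ρ = σ ∘ π`
is a ring endomorphism of `D` with `ρ(K) = 0` and `c ≡ ρ c (mod K)` for every `c`. For
`ε ∈ E_n(D)` the matrix `ε · ρ(ε)⁻¹` then lies in `E_n(D, K)`: on a generator it is `E_ij(c - ρ c)`,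
and for `n ≥ 3` every `E_ij(x)` with `x ∈ K` lies in `E_n(D, K)` by the commutator relations.
Since `v ≡ e₁ (mod K)` we have `ρ(v) = e₁`, so applying `ρ` to `v ε = e₁` gives `e₁ ρ(ε) = e₁`,
hence `v · ε ρ(ε)⁻¹ = e₁ ρ(ε)⁻¹ = e₁`.
-/

open Matrix

/-- The set of unimodular rows of length `n` over `R`. -/
def Um (n : ℕ) (R : Type*) [CommRing R] : Set (Fin n → R) :=
  {v | ∃ w : Fin n → R, ∑ i, v i * w i = 1}

/-- The set of unimodular rows of length `n` relative to the ideal `I`: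
unimodular rows congruent to `(1, 0, …, 0)` modulo `I`. -/
def UmRel (n : ℕ) (R : Type*) [CommRing R] (I : Ideal R) : Set (Fin n → R) :=
  {v | v ∈ Um n R ∧ ∀ i : Fin n, if i.val = 0 then v i - 1 ∈ I else v i ∈ I}

/-- The elementary subgroup `E_n(R)` of `GL_n(R)`, generated by the elementary
matrices `E_{ij}(c) = 1 + c·e_{ij}`, `i ≠ j` (i.e. transvections). -/
def Elem (n : ℕ) (R : Type*) [CommRing R] : Subgroup (GL (Fin n) R) :=
  Subgroup.closure {g | ∃ i j : Fin n, i ≠ j ∧ ∃ c : R,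
    (g : Matrix (Fin n) (Fin n) R) = Matrix.transvection i j c}

/-- The relative elementary subgroup `E_n(R, I)`: the smallest normal subgroup of
`E_n(R)` containing the matrices `E_{21}(x)`, `x ∈ I`; realized as the subgroup
generated by all `E_n(R)`-conjugates of such matrices. -/
def ElemRel (n : ℕ) (R : Type*) [CommRing R] (I : Ideal R) : Subgroup (GL (Fin n) R) :=
  Subgroup.closure {g | ∃ e ∈ Elem n R, ∃ h : GL (Fin n) R, ∃ i j : Fin n,
    i.val = 1 ∧ j.val = 0 ∧
    (∃ x ∈ I, (h : Matrix (Fin n) (Fin n) R) = Matrix.transvection i j x) ∧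
    g = e * h * e⁻¹}

/-- The row `e₁ = (1, 0, …, 0)`. -/
def rowE1 (n : ℕ) (R : Type*) [CommRing R] : Fin n → R :=
  fun i => if i.val = 0 then 1 else 0

/-- The double `D(R, I) = {(a, b) ∈ R × R : a − b ∈ I}` of a ring `R` along an
ideal `I`, as a subring of `R × R`. -/
def Double (R : Type*) [CommRing R] (I : Ideal R) : Subring (R × R) where
  carrier := {x | x.1 - x.2 ∈ I}
  mul_mem' := by
    intro x y hx hy
    simp only [Set.mem_setOf_eq, Prod.fst_mul, Prod.snd_mul] at *
    have h : x.1 * y.1 - x.2 * y.2 = x.1 * (y.1 - y.2) + (x.1 - x.2) * y.2 := by ring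
    rw [h]
    exact I.add_mem (I.mul_mem_left _ hy) (I.mul_mem_right _ hx)
  one_mem' := by simp
  add_mem' := by
    intro x y hx hy
    simp only [Set.mem_setOf_eq, Prod.fst_add, Prod.snd_add] at *
    have h : x.1 + y.1 - (x.2 + y.2) = (x.1 - x.2) + (y.1 - y.2) := by ring
    rw [h]
    exact I.add_mem hx hy
  zero_mem' := by simp
  neg_mem' := by
    intro x hx
    simp only [Set.mem_setOf_eq, Prod.fst_neg, Prod.snd_neg] at *
    have h : -x.1 - -x.2 = -(x.1 - x.2) := by ring
    rw [h]
    exact I.neg_mem hx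

/-- The kernel `K = {(0, x) : x ∈ I}` of the first projection `D(R, I) → R`. -/
def DoubleKer (R : Type*) [CommRing R] (I : Ideal R) : Ideal (Double R I) :=
  RingHom.ker ((RingHom.fst R R).comp (Double R I).subtype)

namespace Matrix

section Transvection

variable {n : Type*} [Fintype n] [DecidableEq n] {A : Type*} [CommRing A]

def transvectionGL (i j : n) (hij : i ≠ j) (c : A) : GL n A where
  val := transvection i j c
  inv := transvection i j (-c)
  val_inv := by rw [transvection_mul_transvection_same _ _ hij]; simp
  inv_val := by rw [transvection_mul_transvection_same _ _ hij]; simp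

theorem transvectionGL_inv (i j : n) (hij : i ≠ j) (c : A) :
    (transvectionGL i j hij c)⁻¹ = transvectionGL i j hij (-c) :=
  Units.ext rfl

theorem transvectionGL_mul (i j : n) (hij : i ≠ j) (c d : A) :
    transvectionGL i j hij c * transvectionGL i j hij d = transvectionGL i j hij (c + d) :=
  Units.ext (transvection_mul_transvection_same _ _ hij c d)

theorem transvection_commutator {i j k : n} (hij : i ≠ j) (hik : i ≠ k) (hkj : k ≠ j)
    (x y : A) :
    transvection i k x * transvection k j y * transvection i k (-x) * transvection k j (-y) =
      transvection i j (x * y) := by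
  have hz : ∀ {a b c d : n}, b ≠ c → ∀ u w : A, single a b u * single c d w = 0 :=
    fun h u w => single_mul_single_of_ne u _ _ _ h w
  simp only [transvection, Matrix.add_mul, Matrix.mul_add, Matrix.one_mul, Matrix.mul_one,
    single_mul_single_same, hz hik.symm, hz hij.symm, hz hkj.symm, add_zero, neg_mul, mul_neg,
    ← single_neg]
  abel

theorem transvectionGL_commutator {i j k : n} (hij : i ≠ j) (hik : i ≠ k) (hkj : k ≠ j)
    (x y : A) :
    transvectionGL i k hik x * transvectionGL k j hkj y * (transvectionGL i k hik x)⁻¹ *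
      (transvectionGL k j hkj y)⁻¹ = transvectionGL i j hij (x * y) :=
  Units.ext (transvection_commutator hij hik hkj x y)

theorem GeneralLinearGroup.map_transvectionGL {B : Type*} [CommRing B] (f : A →+* B)
    (i j : n) (hij : i ≠ j) (c : A) :
    GeneralLinearGroup.map f (transvectionGL i j hij c) = transvectionGL i j hij (f c) := by
  ext a b
  simp [transvectionGL, transvection, single, one_apply, apply_ite f]

end Transvection

end Matrix

section ElementarySubgroups

variable {A : Type*} [CommRing A] {J : Ideal A}

theorem transvectionGL_mem_elem {n : ℕ} (i j : Fin n) (hij : i ≠ j) (c : A) :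
    transvectionGL i j hij c ∈ Elem n A :=
  Subgroup.subset_closure ⟨i, j, hij, c, rfl⟩

theorem conj_mem_elemRel {n : ℕ} {g x : GL (Fin n) A} (hg : g ∈ Elem n A)
    (hx : x ∈ ElemRel n A J) : g * x * g⁻¹ ∈ ElemRel n A J := by
  induction hx using Subgroup.closure_induction with
  | mem y hy =>
    obtain ⟨e, he, w, i, j, hi, hj, hw, rfl⟩ := hy
    exact Subgroup.subset_closure ⟨g * e, mul_mem hg he, w, i, j, hi, hj, hw, by group⟩
  | one => simpa only [mul_one, mul_inv_cancel] using one_mem _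
  | mul a b _ _ ha hb =>
    simpa only [conj_mul] using mul_mem ha hb
  | inv a _ ha =>
    simpa only [conj_inv] using inv_mem ha

section Commutator

variable {n : ℕ} {i j k : Fin n} (hij : i ≠ j) (hik : i ≠ k) (hkj : k ≠ j) (c d : A)
include hij hik hkj

theorem transvectionGL_mem_elemRel_of_left
    (h : transvectionGL i k hik c ∈ ElemRel n A J) :
    transvectionGL i j hij (c * d) ∈ ElemRel n A J := by
  rw [← transvectionGL_commutator hij hik hkj]
  simpa only [mul_assoc] using
    mul_mem h (conj_mem_elemRel (transvectionGL_mem_elem _ _ _ _) (inv_mem h))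

theorem transvectionGL_mem_elemRel_of_right
    (h : transvectionGL k j hkj d ∈ ElemRel n A J) :
    transvectionGL i j hij (c * d) ∈ ElemRel n A J := by
  rw [← transvectionGL_commutator hij hik hkj]
  exact mul_mem (conj_mem_elemRel (transvectionGL_mem_elem _ _ _ _) h) (inv_mem h)

end Commutator

section Relative

variable {m : ℕ} {x : A}

theorem Fin.exists_ne_and_ne (a b : Fin (m + 3)) : ∃ k, k ≠ a ∧ k ≠ b := by
  obtain ⟨k, -, hk⟩ := Finset.exists_mem_notMem_of_card_lt_card
    (s := {a, b}) (t := Finset.univ) (by simpa using (Finset.card_le_two).trans_lt (by omega))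
  exact ⟨k, by simpa [not_or] using hk⟩

theorem transvectionGL_one_zero_mem_elemRel (hx : x ∈ J) (h : (1 : Fin (m + 3)) ≠ 0) :
    transvectionGL 1 0 h x ∈ ElemRel (m + 3) A J :=
  Subgroup.subset_closure
    ⟨1, one_mem _, transvectionGL 1 0 h x, 1, 0, Fin.val_one _, Fin.val_zero _, ⟨x, hx, rfl⟩,
      by group⟩

theorem transvectionGL_one_mem_elemRel (hx : x ∈ J) {j : Fin (m + 3)} (hj : 1 ≠ j) :
    transvectionGL 1 j hj x ∈ ElemRel (m + 3) A J := by
  obtain rfl | hj0 := eq_or_ne j 0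
  · exact transvectionGL_one_zero_mem_elemRel hx hj
  · simpa only [mul_one] using transvectionGL_mem_elemRel_of_left hj one_ne_zero hj0.symm x 1
      (transvectionGL_one_zero_mem_elemRel hx one_ne_zero)

theorem transvectionGL_mem_elemRel_of_ne_one (hx : x ∈ J) {i j : Fin (m + 3)} (hi : i ≠ 1)
    (hj : j ≠ 1) (hij : i ≠ j) : transvectionGL i j hij x ∈ ElemRel (m + 3) A J := by
  simpa only [one_mul] using transvectionGL_mem_elemRel_of_right hij hi hj.symm 1 x
    (transvectionGL_one_mem_elemRel hx hj.symm)

theorem transvectionGL_mem_elemRel (hx : x ∈ J) (i j : Fin (m + 3)) (hij : i ≠ j) :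
    transvectionGL i j hij x ∈ ElemRel (m + 3) A J := by
  obtain rfl | hi := eq_or_ne i 1
  · exact transvectionGL_one_mem_elemRel hx hij
  obtain rfl | hj := eq_or_ne j 1
  · obtain ⟨k, hki, hk1⟩ := Fin.exists_ne_and_ne i 1
    simpa only [mul_one] using transvectionGL_mem_elemRel_of_left hij hki.symm hk1 x 1
      (transvectionGL_mem_elemRel_of_ne_one hx hi hk1 hki.symm)
  · exact transvectionGL_mem_elemRel_of_ne_one hx hi hj hij

end Relative

theorem mul_map_inv_mem_elemRel {m : ℕ} (ρ : A →+* A) (hρ : ∀ c, c - ρ c ∈ J)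
    {ε : GL (Fin (m + 3)) A} (hε : ε ∈ Elem (m + 3) A) :
    ε * (GeneralLinearGroup.map ρ ε)⁻¹ ∈ ElemRel (m + 3) A J := by
  induction hε using Subgroup.closure_induction with
  | mem y hy =>
    obtain ⟨i, j, hij, c, hc⟩ := hy
    obtain rfl : y = transvectionGL i j hij c := Units.ext hc
    rw [GeneralLinearGroup.map_transvectionGL, transvectionGL_inv, transvectionGL_mul,
      ← sub_eq_add_neg]
    exact transvectionGL_mem_elemRel (hρ c) i j hij
  | one => simpa only [map_one, inv_one, mul_one] using one_mem _
  | mul a b ha _ hqa hqb =>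
    have key : a * b * (GeneralLinearGroup.map ρ (a * b))⁻¹ =
        a * (b * (GeneralLinearGroup.map ρ b)⁻¹) * a⁻¹ *
          (a * (GeneralLinearGroup.map ρ a)⁻¹) := by
      rw [map_mul]; group
    rw [key]
    exact mul_mem (conj_mem_elemRel ha hqb) hqa
  | inv a ha hqa =>
    have key : a⁻¹ * (GeneralLinearGroup.map ρ a⁻¹)⁻¹ =
        a⁻¹ * (a * (GeneralLinearGroup.map ρ a)⁻¹)⁻¹ * a⁻¹⁻¹ := by
      rw [map_inv]; group
    rw [key]
    exact conj_mem_elemRel (inv_mem ha) (inv_mem hqa)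

end ElementarySubgroups

section Rows

variable {n : ℕ} {A : Type*} [CommRing A]

theorem map_rowE1 {B : Type*} [CommRing B] (f : A →+* B) (i : Fin n) :
    f (rowE1 n A i) = rowE1 n B i := by
  simp [rowE1, apply_ite f]

theorem vecMul_inv_eq_self {g : GL (Fin n) A} {w : Fin n → A}
    (h : w ᵥ* (g : Matrix _ _ A) = w) :
    w ᵥ* (↑g⁻¹ : Matrix _ _ A) = w := by
  conv_lhs => rw [← h]
  rw [vecMul_vecMul, ← Units.val_mul, mul_inv_cancel, Units.val_one, vecMul_one]

end Rows

section Retraction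

variable {A B : Type*} [CommRing A] [CommRing B] {π : A →+* B} {σ : B →+* A}

theorem sub_comp_mem_ker (hσ : ∀ b, π (σ b) = b) (c : A) :
    c - σ.comp π c ∈ RingHom.ker π := by
  simp [RingHom.mem_ker, hσ]

theorem comp_eq_rowE1_of_congr {n : ℕ} {v : Fin n → A}
    (hv : ∀ i : Fin n, if i.val = 0 then v i - 1 ∈ RingHom.ker π else v i ∈ RingHom.ker π) :
    σ.comp π ∘ v = rowE1 n A := by
  funext i
  have hvi := hv i
  simp only [rowE1, Function.comp_apply, RingHom.comp_apply]
  split_ifs at hvi ⊢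
  · rw [RingHom.mem_ker, map_sub, map_one, sub_eq_zero] at hvi
    rw [hvi, map_one]
  · rw [RingHom.mem_ker] at hvi
    rw [hvi, map_zero]

theorem exists_mem_elemRel_vecMul_eq_rowE1_of_rightInverse (hσ : ∀ b, π (σ b) = b) {m : ℕ}
    {v : Fin (m + 3) → A}
    (hv : ∀ i : Fin (m + 3), if i.val = 0 then v i - 1 ∈ RingHom.ker π else v i ∈ RingHom.ker π)
    {ε : GL (Fin (m + 3)) A} (hε : ε ∈ Elem (m + 3) A)
    (h : v ᵥ* (ε : Matrix (Fin (m + 3)) (Fin (m + 3)) A) = rowE1 (m + 3) A) :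
    ∃ ε' ∈ ElemRel (m + 3) A (RingHom.ker π),
      v ᵥ* (ε' : Matrix (Fin (m + 3)) (Fin (m + 3)) A) = rowE1 (m + 3) A := by
  set ρ := σ.comp π
  refine ⟨ε * (GeneralLinearGroup.map ρ ε)⁻¹,
    mul_map_inv_mem_elemRel ρ (sub_comp_mem_ker hσ) hε, ?_⟩
  have hfix :
      rowE1 (m + 3) A ᵥ* (GeneralLinearGroup.map ρ ε : Matrix _ _ A) = rowE1 (m + 3) A := by
    funext i
    have hi := congrArg (fun w => ρ (w i)) h
    simp only [RingHom.map_vecMul, map_rowE1] at hi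
    rwa [comp_eq_rowE1_of_congr hv] at hi
  rw [Units.val_mul, ← vecMul_vecMul, h, vecMul_inv_eq_self hfix]

end Retraction

def doubleDiag (R : Type*) [CommRing R] (I : Ideal R) : R →+* Double R I :=
  (RingHom.prod (RingHom.id R) (RingHom.id R)).codRestrict (Double R I)
    fun a => show a - a ∈ I by simp

/-- for the double `D = D(R, I)` and the kernel `K` of the first
projection `D → R`, if `v ∈ Um_n(D, K)` (with `n = m + 3 ≥ 3`) satisfies
`v·ε = e₁` for some `ε ∈ E_n(D)`, then `v·ε' = e₁` for some `ε' ∈ E_n(D, K)`. -/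
theorem trivial_absolute_implies_trivial_relative_double
    (R : Type*) [CommRing R] (I : Ideal R)
    (m : ℕ) (v : Fin (m + 3) → Double R I)
    (hv : v ∈ UmRel (m + 3) (Double R I) (DoubleKer R I))
    (ε : GL (Fin (m + 3)) (Double R I)) (hε : ε ∈ Elem (m + 3) (Double R I))
    (h : Matrix.vecMul v (ε : Matrix (Fin (m + 3)) (Fin (m + 3)) (Double R I)) =
      rowE1 (m + 3) (Double R I)) :
    ∃ ε' ∈ ElemRel (m + 3) (Double R I) (DoubleKer R I),
      Matrix.vecMul v (ε' : Matrix (Fin (m + 3)) (Fin (m + 3)) (Double R I)) =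
        rowE1 (m + 3) (Double R I) :=
  exists_mem_elemRel_vecMul_eq_rowE1_of_rightInverse (σ := doubleDiag R I) (fun _ => rfl)
    hv.2 hε h
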